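/- Let H^α_{x,U} be the Hjorth invariant functions. For all (x,U), (y,V), (z,W) in X × T* and β < α: F^α_{x,U}(F^β_{y,V}, β) = H^α_{x,U}(y,V,β); moreover F^α_{x,U} = F^α_{z,W} if and only if H^α_{x,U} = H^α_{z,W}. -/

import Mathlib

/-!
Both `hF α x U = hF α z W` and `hH α x U = hH α z W` unfold to the same shape: equal orbit
closures, and for every `β < α` and `(y, V) ∈ X × T*` the same answer to "is there `U' ⊆ U` in
`T*` whose level-`β` invariant at `x` equals that of `(y, V)`". By induction on `α` the level-`β`
equalities for `F` and `H` agree, hence so do these answers; the value identity is the same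
unfolding at a single argument.
-/

noncomputable section

open scoped Classical

universe u

variable {G X : Type u} [TopologicalSpace G] [Group G] [IsTopologicalGroup G]
  [TopologicalSpace X] [MulAction G X] [ContinuousSMul G X]

/-- The closure of the partial orbit `U · x`. -/
def orbCl (U : Set G) (x : X) : Set X :=
  closure ((fun g : G => g • x) '' U)

/-- Hjorth's invariant functions `H^α_{x,U}`, represented as a pair consisting of
`I_{x,U}(0) = closure (U·x)` together with the map sending a triple `((y,V),β)` with
`V ∈ T*` and `β < α` to the value (`some true` for `1`, `some false` for `0`) of
`H^α_{x,U}(y,V,β)`, and `none` outside the domain.  `H^{β+1}_{x,U}(y,V,β) = 1` iff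
there is a nonempty open `U' ⊆ U` with `H^β_{x,U'} = H^β_{y,V}`; the restriction
property `H^α_{x,U} ↾ β = H^β_{x,U}` holds by construction. -/
noncomputable def hH (α : Ordinal.{u}) (x : X) (U : Set G) :
    Set X × ((X × Set G) × Ordinal.{u} → Option Bool) :=
  ⟨orbCl U x,
    fun q =>
      if h : q.2 < α ∧ IsOpen q.1.2 ∧ q.1.2.Nonempty then
        some (if (∃ U' : Set G, IsOpen U' ∧ U'.Nonempty ∧ U' ⊆ U ∧
            hH q.2 x U' = hH q.2 q.1.1 q.1.2) then true else false)
      else none⟩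
termination_by α
decreasing_by all_goals exact h.1

/-- The type of the invariant functions `F^α`: an `F^α`-invariant consists of the
base value `closure (U·x)` together with a map sending pairs `(w, β)` with `β < α`
and `w` in the type of `F^β`-invariants to `some true`/`some false` (the values `1`/`0`),
or `none` for arguments outside the domain. -/
noncomputable def FT (X G : Type u) : Ordinal.{u} → Type (u + 1) :=
  Ordinal.lt_wf.fix fun α ih =>
    Set X × ((Σ β : {b : Ordinal.{u} // b < α}, ih β.1 β.2) → Option Bool)

theorem FT_eq (X G : Type u) (α : Ordinal.{u}) :
    FT X G α =
      (Set X × ((Σ β : {b : Ordinal.{u} // b < α}, FT X G β.1) → Option Bool)) := by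
  rw [FT, WellFounded.fix_eq]

/-- Hjorth's recursive invariants `F^α_{x,U}`: the base value is `closure (U·x)`, and
for `β < α` the value at `(F^β_{y,V}, β)` (for `(y,V) ∈ X × T*`) is `1` iff there is a
nonempty open `U' ⊆ U` with `F^β_{x,U'} = F^β_{y,V}`; arguments that are not
`F^β`-invariants of pairs from `X × T*` are outside the domain (`none`). -/
noncomputable def hF (α : Ordinal.{u}) (x : X) (U : Set G) : FT X G α :=
  cast (FT_eq X G α).symm
    (⟨orbCl U x,
      fun p =>
        if (∃ (y : X) (V : Set G), IsOpen V ∧ V.Nonempty ∧ p.2 = hF p.1.1 y V) then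
          some (if (∃ U' : Set G, IsOpen U' ∧ U'.Nonempty ∧ U' ⊆ U ∧
              hF p.1.1 x U' = p.2) then true else false)
        else none⟩ :
      Set X × ((Σ β : {b : Ordinal.{u} // b < α}, FT X G β.1) → Option Bool))
termination_by α
decreasing_by all_goals exact p.1.2

section

omit [IsTopologicalGroup G] [ContinuousSMul G X]

lemma hH_fst (α : Ordinal.{u}) (x : X) (U : Set G) : (hH α x U).1 = orbCl U x := by
  rw [hH]

lemma hH_snd_apply (α : Ordinal.{u}) (x : X) (U : Set G) (q : (X × Set G) × Ordinal.{u}) :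
    (hH α x U).2 q =
      if q.2 < α ∧ IsOpen q.1.2 ∧ q.1.2.Nonempty then
        some (decide (∃ U' : Set G, IsOpen U' ∧ U'.Nonempty ∧ U' ⊆ U ∧
          hH q.2 x U' = hH q.2 q.1.1 q.1.2))
      else none := by
  conv_lhs => rw [hH]
  rfl

lemma cast_hF (α : Ordinal.{u}) (x : X) (U : Set G) :
    cast (FT_eq X G α) (hF α x U) =
      ⟨orbCl U x, fun p =>
        if ∃ (y : X) (V : Set G), IsOpen V ∧ V.Nonempty ∧ p.2 = hF p.1.1 y V then
          some (decide (∃ U' : Set G, IsOpen U' ∧ U'.Nonempty ∧ U' ⊆ U ∧ hF p.1.1 x U' = p.2))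
        else none⟩ := by
  conv_lhs => rw [hF]
  rw [cast_cast, cast_eq]
  rfl

lemma hH_snd_apply_of_lt {α β : Ordinal.{u}} (hβ : β < α) (x y : X) (U : Set G) {V : Set G}
    (hV : IsOpen V) (hVne : V.Nonempty) :
    (hH α x U).2 ((y, V), β) =
      some (decide (∃ U' : Set G, IsOpen U' ∧ U'.Nonempty ∧ U' ⊆ U ∧ hH β x U' = hH β y V)) := by
  rw [hH_snd_apply, if_pos ⟨hβ, hV, hVne⟩]

lemma cast_hF_snd_apply_hF {α β : Ordinal.{u}} (hβ : β < α) (x y : X) (U : Set G) {V : Set G}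
    (hV : IsOpen V) (hVne : V.Nonempty) :
    (cast (FT_eq X G α) (hF α x U)).2 ⟨⟨β, hβ⟩, hF β y V⟩ =
      some (decide (∃ U' : Set G, IsOpen U' ∧ U'.Nonempty ∧ U' ⊆ U ∧ hF β x U' = hF β y V)) := by
  rw [cast_hF]
  exact if_pos ⟨y, V, hV, hVne, rfl⟩

lemma hH_eq_hH_iff (α : Ordinal.{u}) (x z : X) (U W : Set G) :
    hH α x U = hH α z W ↔ orbCl U x = orbCl W z ∧
      ∀ β < α, ∀ (y : X) (V : Set G), IsOpen V → V.Nonempty →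
        ((∃ U' : Set G, IsOpen U' ∧ U'.Nonempty ∧ U' ⊆ U ∧ hH β x U' = hH β y V) ↔
          (∃ W' : Set G, IsOpen W' ∧ W'.Nonempty ∧ W' ⊆ W ∧ hH β z W' = hH β y V)) := by
  rw [Prod.ext_iff, hH_fst, hH_fst, funext_iff]
  refine and_congr_right fun _ => ⟨fun h β hβ y V hV hVne => ?_, fun h q => ?_⟩
  · simpa only [hH_snd_apply_of_lt hβ _ y _ hV hVne, Option.some.injEq, decide_eq_decide]
      using h ((y, V), β)
  · obtain ⟨⟨y, V⟩, β⟩ := q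
    simp only [hH_snd_apply]
    split_ifs with hq
    · rw [h β hq.1 y V hq.2.1 hq.2.2]
    · rfl

lemma hF_eq_hF_iff (α : Ordinal.{u}) (x z : X) (U W : Set G) :
    hF α x U = hF α z W ↔ orbCl U x = orbCl W z ∧
      ∀ β < α, ∀ (y : X) (V : Set G), IsOpen V → V.Nonempty →
        ((∃ U' : Set G, IsOpen U' ∧ U'.Nonempty ∧ U' ⊆ U ∧ hF β x U' = hF β y V) ↔
          (∃ W' : Set G, IsOpen W' ∧ W'.Nonempty ∧ W' ⊆ W ∧ hF β z W' = hF β y V)) := by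
  rw [← cast_inj (FT_eq X G α), cast_hF, cast_hF, Prod.ext_iff, funext_iff]
  refine and_congr_right fun _ => ⟨fun h β hβ y V hV hVne => ?_, fun h p => ?_⟩
  · have hrange : ∃ (y' : X) (V' : Set G), IsOpen V' ∧ V'.Nonempty ∧ hF β y V = hF β y' V' :=
      ⟨y, V, hV, hVne, rfl⟩
    simpa only [if_pos hrange, Option.some.injEq, decide_eq_decide] using h ⟨⟨β, hβ⟩, hF β y V⟩
  · obtain ⟨⟨β, hβ⟩, w⟩ := p
    dsimp only
    split_ifs with hw
    · obtain ⟨y, V, hV, hVne, rfl⟩ := hw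
      rw [h β hβ y V hV hVne]
    · rfl

theorem hF_eq_hF_iff_hH_eq_hH (α : Ordinal.{u}) (x z : X) (U W : Set G) :
    hF α x U = hF α z W ↔ hH α x U = hH α z W := by
  induction α using WellFoundedLT.induction generalizing x z U W with
  | ind α ih =>
    rw [hF_eq_hF_iff, hH_eq_hH_iff]
    refine and_congr_right fun _ => forall₂_congr fun β hβ => ?_
    simp only [ih β hβ]

end

theorem hF_hH_general (α β : Ordinal.{u}) (hβ : β < α) (x y z : X) (U V W : Set G)
    (hV : IsOpen V) (hVne : V.Nonempty) :
    ((cast (FT_eq X G α) (hF α x U)).2 ⟨⟨β, hβ⟩, hF β y V⟩ =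
        (hH α x U).2 ((y, V), β)) ∧
      (hF α x U = hF α z W ↔ hH α x U = hH α z W) := by
  refine ⟨?_, hF_eq_hF_iff_hH_eq_hH α x z U W⟩
  rw [cast_hF_snd_apply_hF hβ x y U hV hVne, hH_snd_apply_of_lt hβ x y U hV hVne]
  simp only [hF_eq_hF_iff_hH_eq_hH]

/-- Relation between the `F`- and `H`-invariants: for `β < α` and `(y,V) ∈ X × T*`,
`F^α_{x,U}(F^β_{y,V}, β) = H^α_{x,U}(y,V,β)`; moreover `F^α_{x,U} = F^α_{z,W}` iff
`H^α_{x,U} = H^α_{z,W}`. -/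
theorem hF_hH (α β : Ordinal.{u}) (hβ : β < α) (x y z : X) (U V W : Set G)
    (hU : IsOpen U) (hUne : U.Nonempty) (hV : IsOpen V) (hVne : V.Nonempty)
    (hW : IsOpen W) (hWne : W.Nonempty) :
    ((cast (FT_eq X G α) (hF α x U)).2 ⟨⟨β, hβ⟩, hF β y V⟩ =
        (hH α x U).2 ((y, V), β)) ∧
      (hF α x U = hF α z W ↔ hH α x U = hH α z W) :=
  hF_hH_general α β hβ x y z U V W hV hVne

end
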